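/- arXiv:1501.05998 — 5 statements merged into one kernel-verified Lean document; each statement's English description precedes it below -/
import Mathlib

section
/- Let n be a non-negative integer and let s(k) denote the sum of the binary digits of k. Then for all real numbers x and y, (x+y)^{s(n)} = ∑ x^{s(m)} y^{s(n-m)}, where the sum ranges over all integers m with 0 ≤ m ≤ n such that the pair (m, n-m) is carry-free, i.e. s(m) + s(n-m) = s(n). -/
/-- `s k` is the sum of the binary digits of `k`. -/
def s (k : ℕ) : ℕ := (Nat.digits 2 k).sum

/-!
Since `s (2k + i) = s k + i` for `i ∈ {0, 1}`, a pair `(2a + i, 2b + j)` is carry-free exactly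
when `(a, b)` is and the lowest bits `i, j` are not both `1` (then `s` drops by subadditivity).
So the carry-free `m ≤ 2q` are the doubles of those for `q`, while those for `2q + 1` are the
`2a` and `2a + 1` with `a` carry-free for `q`. Hence the sum for `2q` equals the sum for `q`, and
the sum for `2q + 1` is `x + y` times it, matching `s (2q) = s q` and `s (2q + 1) = s q + 1`.
-/

open Finset

lemma s_two_mul (k : ℕ) : s (2 * k) = s k := by
  rcases Nat.eq_zero_or_pos k with rfl | hk
  · rfl
  · simp [s, Nat.digits_base_mul one_lt_two hk]

lemma s_two_mul_add_one (k : ℕ) : s (2 * k + 1) = s k + 1 := by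
  rw [s, add_comm, Nat.digits_add 2 one_lt_two 1 k one_lt_two (Or.inl one_ne_zero),
    List.sum_cons, add_comm, s]

lemma s_succ_le (k : ℕ) : s (k + 1) ≤ s k + 1 := by
  induction k using Nat.evenOddRec with
  | h0 => decide
  | h_even k _ => rw [s_two_mul_add_one, s_two_mul]
  | h_odd k ih =>
    rw [show 2 * k + 1 + 1 = 2 * (k + 1) by ring, s_two_mul, s_two_mul_add_one]
    omega

lemma s_add_le (a b : ℕ) : s (a + b) ≤ s a + s b := by
  induction a using Nat.evenOddRec generalizing b with
  | h0 => simp [s]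
  | h_even a ih =>
    obtain ⟨b, rfl | rfl⟩ := Nat.even_or_odd' b
    · rw [← mul_add]
      simpa only [s_two_mul] using ih b
    · rw [← add_assoc, ← mul_add]
      simpa only [s_two_mul, s_two_mul_add_one, ← add_assoc, add_le_add_iff_right] using ih b
  | h_odd a ih =>
    obtain ⟨b, rfl | rfl⟩ := Nat.even_or_odd' b
    · rw [show 2 * a + 1 + 2 * b = 2 * (a + b) + 1 by ring]
      simp only [s_two_mul, s_two_mul_add_one]
      linarith [ih b]
    · rw [show 2 * a + 1 + (2 * b + 1) = 2 * (a + b + 1) by ring]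
      simp only [s_two_mul, s_two_mul_add_one]
      linarith [ih b, s_succ_le (a + b)]

def CarryFree (j k : ℕ) : Prop := s j + s k = s (j + k)

lemma carryFree_comm {j k : ℕ} : CarryFree j k ↔ CarryFree k j := by
  rw [CarryFree, CarryFree, add_comm j, add_comm (s j)]

lemma carryFree_two_mul_two_mul {j k : ℕ} : CarryFree (2 * j) (2 * k) ↔ CarryFree j k := by
  rw [CarryFree, CarryFree, ← mul_add, s_two_mul, s_two_mul, s_two_mul]

lemma carryFree_two_mul_add_one_two_mul {j k : ℕ} :
    CarryFree (2 * j + 1) (2 * k) ↔ CarryFree j k := by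
  rw [CarryFree, CarryFree, show 2 * j + 1 + 2 * k = 2 * (j + k) + 1 by ring]
  simp only [s_two_mul, s_two_mul_add_one]
  omega

lemma carryFree_two_mul_two_mul_add_one {j k : ℕ} :
    CarryFree (2 * j) (2 * k + 1) ↔ CarryFree j k := by
  rw [carryFree_comm, carryFree_two_mul_add_one_two_mul, carryFree_comm]

lemma not_carryFree_two_mul_add_one_two_mul_add_one (j k : ℕ) :
    ¬CarryFree (2 * j + 1) (2 * k + 1) := by
  rw [CarryFree, show 2 * j + 1 + (2 * k + 1) = 2 * (j + k + 1) by ring]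
  simp only [s_two_mul, s_two_mul_add_one]
  linarith [s_succ_le (j + k), s_add_le j k]

def carryFreeSet (n : ℕ) : Finset ℕ := {m ∈ range (n + 1) | s m + s (n - m) = s n}

lemma mem_carryFreeSet {m n : ℕ} : m ∈ carryFreeSet n ↔ m ≤ n ∧ CarryFree m (n - m) := by
  simp only [carryFreeSet, mem_filter, mem_range, Nat.lt_succ_iff, CarryFree]
  exact and_congr_right fun h => by rw [Nat.add_sub_cancel' h]

lemma two_mul_mem_carryFreeSet_two_mul {a q : ℕ} :
    2 * a ∈ carryFreeSet (2 * q) ↔ a ∈ carryFreeSet q := by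
  simp [mem_carryFreeSet, ← Nat.mul_sub, carryFree_two_mul_two_mul]

lemma two_mul_add_one_notMem_carryFreeSet_two_mul (a q : ℕ) :
    2 * a + 1 ∉ carryFreeSet (2 * q) := by
  rw [mem_carryFreeSet]
  rintro ⟨h, hc⟩
  rw [show 2 * q - (2 * a + 1) = 2 * (q - a - 1) + 1 by omega] at hc
  exact not_carryFree_two_mul_add_one_two_mul_add_one _ _ hc

lemma two_mul_mem_carryFreeSet_two_mul_add_one {a q : ℕ} :
    2 * a ∈ carryFreeSet (2 * q + 1) ↔ a ∈ carryFreeSet q := by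
  rw [mem_carryFreeSet, mem_carryFreeSet]
  by_cases h : a ≤ q
  · rw [show 2 * q + 1 - 2 * a = 2 * (q - a) + 1 by omega, carryFree_two_mul_two_mul_add_one]
    exact and_congr_left fun _ => by omega
  · exact iff_of_false (by omega) (by omega)

lemma two_mul_add_one_mem_carryFreeSet_two_mul_add_one {a q : ℕ} :
    2 * a + 1 ∈ carryFreeSet (2 * q + 1) ↔ a ∈ carryFreeSet q := by
  simp [mem_carryFreeSet, ← Nat.mul_sub, carryFree_two_mul_add_one_two_mul]

lemma carryFreeSet_two_mul (q : ℕ) :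
    carryFreeSet (2 * q) = (carryFreeSet q).image (2 * ·) := by
  ext m
  obtain ⟨a, rfl | rfl⟩ := Nat.even_or_odd' m
  · simp [two_mul_mem_carryFreeSet_two_mul]
  · simp [two_mul_add_one_notMem_carryFreeSet_two_mul, Nat.two_mul_ne_two_mul_add_one]

lemma carryFreeSet_two_mul_add_one (q : ℕ) :
    carryFreeSet (2 * q + 1) =
      (carryFreeSet q).image (2 * ·) ∪ (carryFreeSet q).image (2 * · + 1) := by
  ext m
  obtain ⟨a, rfl | rfl⟩ := Nat.even_or_odd' m
  · simp [two_mul_mem_carryFreeSet_two_mul_add_one, Nat.two_mul_ne_two_mul_add_one.symm]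
  · simp [two_mul_add_one_mem_carryFreeSet_two_mul_add_one, Nat.two_mul_ne_two_mul_add_one]

theorem add_pow_s_eq_sum_carryFreeSet {R : Type*} [CommSemiring R] (x y : R) (n : ℕ) :
    (x + y) ^ s n = ∑ m ∈ carryFreeSet n, x ^ s m * y ^ s (n - m) := by
  induction n using Nat.evenOddRec with
  | h0 => simp [carryFreeSet, filter_singleton, s]
  | h_even q ih =>
    rw [carryFreeSet_two_mul, sum_image fun _ _ _ _ h => by simpa using h, s_two_mul, ih]
    refine sum_congr rfl fun a _ => ?_
    rw [← Nat.mul_sub, s_two_mul, s_two_mul]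
  | h_odd q ih =>
    have hdisj :
        Disjoint ((carryFreeSet q).image (2 * ·)) ((carryFreeSet q).image (2 * · + 1)) := by
      simp only [disjoint_left, mem_image]; omega
    rw [carryFreeSet_two_mul_add_one, sum_union hdisj, sum_image fun _ _ _ _ h => by simpa using h,
      sum_image fun _ _ _ _ h => by simpa using h, ← sum_add_distrib, s_two_mul_add_one, pow_succ,
      ih, sum_mul]
    refine sum_congr rfl fun a ha => ?_
    have haq := (mem_carryFreeSet.1 ha).1
    rw [show 2 * q + 1 - 2 * a = 2 * (q - a) + 1 by omega, Nat.add_sub_add_right, ← Nat.mul_sub]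
    simp only [s_two_mul, s_two_mul_add_one]
    ring

/-- **Digital Binomial Theorem.** For every non-negative integer `n` and all real `x, y`,
`(x+y)^{s(n)} = ∑ x^{s(m)} y^{s(n-m)}`, the sum over all `0 ≤ m ≤ n` such that the pair
`(m, n-m)` is carry-free, i.e. `s(m) + s(n-m) = s(n)`. -/
theorem digital_binomial_theorem (n : ℕ) (x y : ℝ) :
    (x + y) ^ s n =
      ∑ m ∈ (Finset.range (n + 1)).filter (fun m => s m + s (n - m) = s n),
        x ^ s m * y ^ s (n - m) :=
  add_pow_s_eq_sum_carryFreeSet x y n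
end

section
/- Let b ≥ 2 and N ≥ 1 be integers and let n be a non-negative integer with n < b^N, with base-b digits d_0(n), d_1(n), …, d_{N-1}(n). Then for all real x and y: ∏_{i=0}^{N-1} binom(x+y+d_i(n)-1, d_i(n)) = ∑_{0 ≤ m ⪯ n} [ ∏_{i=0}^{N-1} binom(x+d_i(m)-1, d_i(m)) · ∏_{i=0}^{N-1} binom(y+d_i(n-m)-1, d_i(n-m)) ], where the sum is over all m with m ⪯ n in base b. -/
/-! Both sides are products over the digits. For a single digit `k` the identity is the
Chu–Vandermonde identity for `binom (x + k - 1) k = Ring.multichoose x k`. The sum over `m ⪯ n`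
factors digit by digit: for `r < b`, `m ↦ (m / b, m % b)` identifies `{m ⪯ b q + r}` with
`{m' ⪯ q} × {s ≤ r}`, and then `b q + r - m = b (q - m') + (r - s)`, so subtracting a dominated
`m` never borrows. -/

/-- The generalized binomial coefficient `binom(x,k) = x(x-1)⋯(x-k+1)/k!`. -/
noncomputable def binom (x : ℝ) (k : ℕ) : ℝ :=
  (∏ i ∈ Finset.range k, (x - i)) / (Nat.factorial k)

/-- `dig b n i` is the `i`-th digit of `n` in base `b`. -/
def dig (b n i : ℕ) : ℕ := n / b ^ i % b

open Finset

theorem Ring.multichoose_add {R : Type*} [CommRing R] [BinomialRing R] (r s : R) (k : ℕ) :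
    Ring.multichoose (r + s) k =
      ∑ ij ∈ antidiagonal k, Ring.multichoose r ij.1 * Ring.multichoose s ij.2 := by
  have h (t : R) (n : ℕ) : Ring.multichoose t n = Int.negOnePow n • Ring.choose (-t) n := by
    rw [Ring.choose_neg', smul_smul, Int.units_mul_self, one_smul]
  rw [h, neg_add, Ring.add_choose_eq k (Commute.all _ _), smul_sum]
  refine sum_congr rfl fun ij hij => ?_
  rw [h, h, smul_mul_smul_comm, ← Int.negOnePow_add, ← Nat.cast_add, mem_antidiagonal.mp hij]

theorem binom_eq_ringChoose (x : ℝ) (k : ℕ) : binom x k = Ring.choose x k := by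
  rw [Ring.choose_eq_smul, ← Polynomial.aeval_eq_smeval, Polynomial.aeval_def,
    ← Polynomial.eval_map, descPochhammer_map, descPochhammer_eval_eq_prod_range, binom,
    smul_eq_mul, div_eq_inv_mul]

theorem binom_add_sub_one_eq_multichoose (x : ℝ) (k : ℕ) :
    binom (x + k - 1) k = Ring.multichoose x k := by
  rw [binom_eq_ringChoose, Ring.multichoose_eq]

theorem dig_zero (b m : ℕ) : dig b m 0 = m % b := by simp [dig]

theorem dig_succ (b m i : ℕ) : dig b m (i + 1) = dig b (m / b) i := by
  rw [dig, dig, pow_succ', Nat.div_div_eq_div_mul]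

section
variable {b s : ℕ}

theorem dig_mul_add_zero (hs : s < b) (m : ℕ) : dig b (b * m + s) 0 = s := by
  rw [dig_zero, Nat.mul_add_mod, Nat.mod_eq_of_lt hs]

theorem dig_mul_add_succ (hs : s < b) (m i : ℕ) : dig b (b * m + s) (i + 1) = dig b m i := by
  rw [dig_succ, Nat.mul_add_div (by omega), Nat.div_eq_of_lt hs, add_zero]

theorem prod_range_succ_dig_mul_add {M : Type*} [CommMonoid M] (f : ℕ → M) (hs : s < b)
    (m N : ℕ) :
    ∏ i ∈ range (N + 1), f (dig b (b * m + s) i) = f s * ∏ i ∈ range N, f (dig b m i) := by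
  simp only [prod_range_succ', dig_mul_add_succ hs, dig_mul_add_zero hs, mul_comm]

end

-- Classical decidability, as in the statement, so that this unfolds to the filter used there.
open Classical in
noncomputable def digitallyDominated (b n : ℕ) : Finset ℕ :=
  (range (n + 1)).filter (fun m => ∀ i, dig b m i ≤ dig b n i)

theorem mem_digitallyDominated {b m n : ℕ} :
    m ∈ digitallyDominated b n ↔ m ≤ n ∧ ∀ i, dig b m i ≤ dig b n i := by
  simp [digitallyDominated]

theorem mul_add_mem_digitallyDominated_iff {b m q r s : ℕ} (hs : s < b) (hr : r < b) :
    b * m + s ∈ digitallyDominated b (b * q + r) ↔ m ∈ digitallyDominated b q ∧ s ≤ r := by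
  have hdig : (∀ i, dig b (b * m + s) i ≤ dig b (b * q + r) i) ↔
      s ≤ r ∧ ∀ i, dig b m i ≤ dig b q i := by
    rw [← Nat.and_forall_add_one]
    simp only [dig_mul_add_zero hs, dig_mul_add_succ hs, dig_mul_add_zero hr, dig_mul_add_succ hr]
  have hle (hsr : s ≤ r) : b * m + s ≤ b * q + r ↔ m ≤ q := by
    refine ⟨fun h => ?_, fun h => Nat.add_le_add (Nat.mul_le_mul_left b h) hsr⟩
    by_contra! hqm
    nlinarith
  rw [mem_digitallyDominated, mem_digitallyDominated, hdig]
  constructor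
  · rintro ⟨hmn, hsr, hdom⟩
    exact ⟨⟨(hle hsr).mp hmn, hdom⟩, hsr⟩
  · rintro ⟨⟨hmq, hdom⟩, hsr⟩
    exact ⟨(hle hsr).mpr hmq, hsr, hdom⟩

theorem sum_digitallyDominated_mul_add {M : Type*} [AddCommMonoid M] (φ : ℕ → M) {b q r : ℕ}
    (hr : r < b) :
    ∑ m ∈ digitallyDominated b (b * q + r), φ m =
      ∑ m ∈ digitallyDominated b q, ∑ s ∈ range (r + 1), φ (b * m + s) := by
  rw [← sum_product']
  symm
  refine sum_nbij' (fun p => b * p.1 + p.2) (fun m => (m / b, m % b)) ?_ ?_ ?_ ?_ (fun _ _ => rfl)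
  · rintro ⟨m, s⟩ hp
    simp only [mem_product, mem_range, Nat.lt_succ_iff] at hp ⊢
    exact (mul_add_mem_digitallyDominated_iff (by omega) hr).mpr hp
  · intro m hm
    rw [← Nat.div_add_mod m b] at hm
    simp only [mem_product, mem_range, Nat.lt_succ_iff]
    exact (mul_add_mem_digitallyDominated_iff (Nat.mod_lt _ (by omega)) hr).mp hm
  · rintro ⟨m, s⟩ hp
    simp only [mem_product, mem_range] at hp
    have hs : s < b := by omega
    simp [Nat.mul_add_div (by omega : 0 < b), Nat.div_eq_of_lt hs, Nat.mod_eq_of_lt hs]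
  · intro m _
    simp [Nat.div_add_mod]

theorem prod_dig_eq_sum_digitallyDominated {R : Type*} [CommSemiring R] {b : ℕ} (f g h : ℕ → R)
    (hfg : ∀ k < b, h k = ∑ ij ∈ antidiagonal k, f ij.1 * g ij.2) (N n : ℕ) (hn : n < b ^ N) :
    ∏ i ∈ range N, h (dig b n i) =
      ∑ m ∈ digitallyDominated b n,
        (∏ i ∈ range N, f (dig b m i)) * ∏ i ∈ range N, g (dig b (n - m) i) := by
  induction N generalizing n with
  | zero =>
    obtain rfl : n = 0 := by simpa using hn
    simp [digitallyDominated, filter_singleton]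
  | succ N ih =>
    have hb : 0 < b := Nat.pos_of_ne_zero fun hb => by simp [hb] at hn
    obtain ⟨q, r, hr, rfl⟩ : ∃ q r, r < b ∧ n = b * q + r :=
      ⟨n / b, n % b, Nat.mod_lt n hb, (Nat.div_add_mod n b).symm⟩
    have hq : q < b ^ N := by
      rw [pow_succ'] at hn
      nlinarith
    have hsub : ∀ m ∈ digitallyDominated b q, ∀ s ∈ range (r + 1),
        b * q + r - (b * m + s) = b * (q - m) + (r - s) := fun m hm s hs => by
      have hbm := Nat.mul_le_mul_left b (mem_digitallyDominated.mp hm).1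
      rw [mem_range] at hs
      rw [Nat.mul_sub]
      omega
    rw [prod_range_succ_dig_mul_add h hr, ih q hq, hfg r hr,
      Nat.sum_antidiagonal_eq_sum_range_succ_mk, sum_digitallyDominated_mul_add _ hr, sum_mul_sum,
      sum_comm]
    refine sum_congr rfl fun m hm => sum_congr rfl fun s hs => ?_
    have hsb : s < b := by rw [mem_range] at hs; omega
    rw [hsub m hm s hs, prod_range_succ_dig_mul_add f hsb,
      prod_range_succ_dig_mul_add g (by omega)]
    ring

open Classical in

theorem digital_binomial_theorem_base_b_general (b N : ℕ)
    (n : ℕ) (hn : n < b ^ N) (x y : ℝ) :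
    ∏ i ∈ Finset.range N, binom (x + y + dig b n i - 1) (dig b n i) =
      ∑ m ∈ (Finset.range (n + 1)).filter (fun m => ∀ i, dig b m i ≤ dig b n i),
        (∏ i ∈ Finset.range N, binom (x + dig b m i - 1) (dig b m i)) *
          ∏ i ∈ Finset.range N, binom (y + dig b (n - m) i - 1) (dig b (n - m) i) :=
  prod_dig_eq_sum_digitallyDominated (fun j => binom (x + j - 1) j) (fun j => binom (y + j - 1) j)
    (fun j => binom (x + y + j - 1) j)
    (fun k _ => by simp only [binom_add_sub_one_eq_multichoose, Ring.multichoose_add]) N n hn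

open Classical in
/-- **Generalized Digital Binomial Theorem.** For `b ≥ 2`, `N ≥ 1` and `n < b^N` with base-`b`
digits `d_i(n)`, and all real `x, y`:
`∏_{i<N} binom(x+y+d_i(n)-1, d_i(n)) = ∑_{0 ≤ m ⪯ n} ∏_{i<N} binom(x+d_i(m)-1, d_i(m)) ·
∏_{i<N} binom(y+d_i(n-m)-1, d_i(n-m))`, the sum over all `m` digitally dominated by `n`. -/
theorem digital_binomial_theorem_base_b (b N : ℕ) (hb : 2 ≤ b) (hN : 1 ≤ N)
    (n : ℕ) (hn : n < b ^ N) (x y : ℝ) :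
    ∏ i ∈ Finset.range N, binom (x + y + dig b n i - 1) (dig b n i) =
      ∑ m ∈ (Finset.range (n + 1)).filter (fun m => ∀ i, dig b m i ≤ dig b n i),
        (∏ i ∈ Finset.range N, binom (x + dig b m i - 1) (dig b m i)) *
          ∏ i ∈ Finset.range N, binom (y + dig b (n - m) i - 1) (dig b (n - m) i) :=
  digital_binomial_theorem_base_b_general b N n hn x y
end

section
/- Let b ≥ 2 and N ≥ 1 be integers, x a real number, and let α_N(j,k) denote the (j,k)-entry of the generalized Sierpinski matrix S_{b,N}(x), for 0 ≤ j,k ≤ b^N - 1. Then α_N(j,k) = ∏_{i} binom(x + d_i - 1, d_i) if k ≤ j and k ⪯ j in base b, where d_0, d_1, …, d_{N-1} are the base-b digits of j-k; and α_N(j,k) = 0 otherwise. -/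
/-- The generalized Sierpinski matrix `S_{b,1}(x)`, with `(j,k)`-entry
`binom(x+j-k-1, j-k)` for `k ≤ j` and `0` otherwise. -/
noncomputable def S1 (b : ℕ) (x : ℝ) : Matrix (Fin b) (Fin b) ℝ :=
  Matrix.of fun j k =>
    if (k : ℕ) ≤ (j : ℕ) then binom (x + ((j : ℕ) - (k : ℕ)) - 1) ((j : ℕ) - (k : ℕ)) else 0

/-- The equivalence `Fin b × Fin (b^N) ≃ Fin (b^(N+1))`, `(p, r) ↦ p·b^N + r`, used to index
Kronecker products. -/
def pke (b N : ℕ) : Fin b × Fin (b ^ N) ≃ Fin (b ^ (N + 1)) :=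
  finProdFinEquiv.trans (finCongr (by ring))

open Kronecker in
/-- The generalized Sierpinski matrices `S_{b,N}(x)`, defined recursively by
`S_{b,N+1}(x) = S_{b,1}(x) ⊗ S_{b,N}(x)` (Kronecker product). -/
noncomputable def Smat (b : ℕ) (x : ℝ) : (N : ℕ) → Matrix (Fin (b ^ N)) (Fin (b ^ N)) ℝ
  | 0 => 1
  | N + 1 => Matrix.reindex (pke b N) (pke b N) (S1 b x ⊗ₖ Smat b x N)

/-!
Write `j = b^N j' + j''` with `j' < b` and `j'' < b^N`, and likewise `k`. The Kronecker recursion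
says `α_{N+1}(j,k) = α_1(j',k') α_N(j'',k'')`, and the closed form satisfies the same recursion:
`k ⪯ j` splits into `k' ≤ j'` and `k'' ⪯ j''`, and then `j - k = b^N (j' - k') + (j'' - k'')`
is computed without borrows, so its top digit is `j' - k'` and its lower digits are those of
`j'' - k''`.
-/

section Digits

variable {b : ℕ}

lemma mod_pow_succ_eq_mul_dig_add (m L : ℕ) : m % b ^ (L + 1) = b ^ L * dig b m L + m % b ^ L := by
  conv_lhs => rw [← Nat.div_add_mod (m % b ^ (L + 1)) (b ^ L)]
  rw [Nat.mod_mod_of_dvd _ (pow_dvd_pow b L.le_succ), pow_succ, Nat.mod_mul_right_div_self, dig]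

lemma le_of_forall_dig_le (hb : 1 < b) {m n : ℕ} (h : ∀ i, dig b m i ≤ dig b n i) : m ≤ n := by
  have hmod : ∀ L, m % b ^ L ≤ n % b ^ L := by
    intro L
    induction L with
    | zero => simp only [pow_zero, Nat.mod_one, le_refl]
    | succ L ih =>
      rw [mod_pow_succ_eq_mul_dig_add, mod_pow_succ_eq_mul_dig_add]
      exact Nat.add_le_add (Nat.mul_le_mul_left _ (h L)) ih
  have hm : m < b ^ (m + n) := (Nat.le_add_right m n).trans_lt (Nat.lt_pow_self hb)
  have hn : n < b ^ (m + n) := (Nat.le_add_left n m).trans_lt (Nat.lt_pow_self hb)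
  simpa [Nat.mod_eq_of_lt hm, Nat.mod_eq_of_lt hn] using hmod (m + n)

lemma dig_eq_zero_of_lt_pow (hb : 0 < b) {n N i : ℕ} (hn : n < b ^ N) (hi : N ≤ i) :
    dig b n i = 0 := by
  rw [dig, Nat.div_eq_of_lt (hn.trans_le (Nat.pow_le_pow_right hb hi)), Nat.zero_mod]

lemma dig_mul_pow_add_of_lt (hb : 0 < b) {N i : ℕ} (p r : ℕ) (hi : i < N) :
    dig b (b ^ N * p + r) i = dig b r i := by
  have hsplit : b ^ N * p = b ^ i * (b * (b ^ (N - i - 1) * p)) := by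
    rw [← mul_assoc, ← mul_assoc, ← pow_succ, ← pow_add]
    congr 2
    omega
  rw [dig, dig, hsplit, Nat.mul_add_div (by positivity), Nat.mul_add_mod]

lemma dig_mul_pow_add_self {N p r : ℕ} (hp : p < b) (hr : r < b ^ N) :
    dig b (b ^ N * p + r) N = p := by
  rw [dig, Nat.mul_add_div (pow_pos (Nat.zero_lt_of_lt hp) N), Nat.div_eq_of_lt hr,
    Nat.add_zero, Nat.mod_eq_of_lt hp]

lemma mul_pow_add_lt_pow_succ {N p r : ℕ} (hp : p < b) (hr : r < b ^ N) :
    b ^ N * p + r < b ^ (N + 1) :=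
  calc b ^ N * p + r < b ^ N * (p + 1) := by rw [mul_add_one]; omega
    _ ≤ b ^ (N + 1) := by rw [pow_succ]; exact Nat.mul_le_mul_left _ hp

lemma forall_dig_le_mul_pow_add_iff (hb : 0 < b) {N p p' r r' : ℕ} (hp : p < b) (hp' : p' < b)
    (hr : r < b ^ N) (hr' : r' < b ^ N) :
    (∀ i, dig b (b ^ N * p + r) i ≤ dig b (b ^ N * p' + r') i) ↔
      p ≤ p' ∧ ∀ i, dig b r i ≤ dig b r' i := by
  constructor
  · intro h
    refine ⟨?_, fun i => ?_⟩
    · simpa [dig_mul_pow_add_self hp hr, dig_mul_pow_add_self hp' hr'] using h N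
    · rcases lt_or_ge i N with hi | hi
      · simpa [dig_mul_pow_add_of_lt hb _ _ hi] using h i
      · simp [dig_eq_zero_of_lt_pow hb hr hi]
  · rintro ⟨htop, hlow⟩ i
    rcases lt_trichotomy i N with hi | rfl | hi
    · simpa [dig_mul_pow_add_of_lt hb _ _ hi] using hlow i
    · simpa [dig_mul_pow_add_self hp hr, dig_mul_pow_add_self hp' hr'] using htop
    · simp [dig_eq_zero_of_lt_pow hb (mul_pow_add_lt_pow_succ hp hr) hi]

lemma prod_range_succ_dig_mul_pow_add {M : Type*} [CommMonoid M] (hb : 0 < b) (f : ℕ → M)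
    {N p r : ℕ} (hp : p < b) (hr : r < b ^ N) :
    ∏ i ∈ Finset.range (N + 1), f (dig b (b ^ N * p + r) i) =
      (∏ i ∈ Finset.range N, f (dig b r i)) * f p := by
  rw [Finset.prod_range_succ, dig_mul_pow_add_self hp hr]
  congr 1
  exact Finset.prod_congr rfl fun i hi => by
    rw [dig_mul_pow_add_of_lt hb _ _ (Finset.mem_range.mp hi)]

end Digits

open Classical in
noncomputable def sierpinskiEntry (b : ℕ) (x : ℝ) (N j k : ℕ) : ℝ :=
  if k ≤ j ∧ ∀ i, dig b k i ≤ dig b j i then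
    ∏ i ∈ Finset.range N, binom (x + dig b (j - k) i - 1) (dig b (j - k) i)
  else 0

lemma sierpinskiEntry_zero (b : ℕ) (x : ℝ) : sierpinskiEntry b x 0 0 0 = 1 := by
  simp [sierpinskiEntry, dig]

lemma sierpinskiEntry_succ {b : ℕ} (hb : 1 < b) (x : ℝ) {N : ℕ} (jp kp : Fin b)
    {jr kr : ℕ} (hjr : jr < b ^ N) (hkr : kr < b ^ N) :
    sierpinskiEntry b x (N + 1) (b ^ N * jp + jr) (b ^ N * kp + kr) =
      S1 b x jp kp * sierpinskiEntry b x N jr kr := by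
  have hb₀ : 0 < b := by omega
  have hdom := forall_dig_le_mul_pow_add_iff hb₀ kp.isLt jp.isLt hkr hjr
  rw [sierpinskiEntry, sierpinskiEntry, S1, Matrix.of_apply]
  by_cases htop : (kp : ℕ) ≤ jp
  · by_cases hlow : ∀ i, dig b kr i ≤ dig b jr i
    · have hdom' := hdom.2 ⟨htop, hlow⟩
      have hsub : b ^ N * jp + jr - (b ^ N * kp + kr) = b ^ N * (jp - kp) + (jr - kr) := by
        have := Nat.mul_le_mul_left (b ^ N) htop
        have := le_of_forall_dig_le hb hlow
        rw [Nat.mul_sub]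
        omega
      rw [if_pos ⟨le_of_forall_dig_le hb hdom', hdom'⟩, if_pos htop,
        if_pos ⟨le_of_forall_dig_le hb hlow, hlow⟩, hsub, ← Nat.cast_sub htop]
      exact (prod_range_succ_dig_mul_pow_add hb₀ (fun d => binom (x + d - 1) d) (by omega)
        (by omega)).trans (mul_comm _ _)
    · rw [if_neg (not_and_of_not_right _ hlow), mul_zero, if_neg fun h => hlow (hdom.1 h.2).2]
  · rw [if_neg htop, zero_mul, if_neg fun h => htop (hdom.1 h.2).1]

lemma pke_apply_val (b N : ℕ) (p : Fin b) (r : Fin (b ^ N)) :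
    (pke b N (p, r) : ℕ) = b ^ N * p + r := by
  simp [pke, finProdFinEquiv, add_comm]

lemma Smat_succ_apply_pke (b N : ℕ) (x : ℝ) (jp kp : Fin b) (jr kr : Fin (b ^ N)) :
    Smat b x (N + 1) (pke b N (jp, jr)) (pke b N (kp, kr)) = S1 b x jp kp * Smat b x N jr kr := by
  simp [Smat, Matrix.reindex_apply, Matrix.kroneckerMap_apply]

lemma Smat_apply {b : ℕ} (hb : 1 < b) (x : ℝ) :
    ∀ (N : ℕ) (j k : Fin (b ^ N)), Smat b x N j k = sierpinskiEntry b x N j k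
  | 0, j, k => by
    have hj : (j : ℕ) = 0 := by simpa using j.isLt
    have hk : (k : ℕ) = 0 := by simpa using k.isLt
    obtain rfl : j = k := Fin.ext (hj.trans hk.symm)
    simp [Smat, hj, sierpinskiEntry_zero]
  | N + 1, j, k => by
    obtain ⟨⟨jp, jr⟩, rfl⟩ := (pke b N).surjective j
    obtain ⟨⟨kp, kr⟩, rfl⟩ := (pke b N).surjective k
    rw [Smat_succ_apply_pke, Smat_apply hb x N jr kr, pke_apply_val, pke_apply_val,
      sierpinskiEntry_succ hb x jp kp jr.isLt kr.isLt]

open Classical in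
theorem sierpinski_entry_formula_general (b N : ℕ) (hb : 2 ≤ b) (x : ℝ)
    (j k : Fin (b ^ N)) :
    Smat b x N j k =
      if (k : ℕ) ≤ (j : ℕ) ∧ ∀ i, dig b k i ≤ dig b j i then
        ∏ i ∈ Finset.range N,
          binom (x + dig b ((j : ℕ) - (k : ℕ)) i - 1) (dig b ((j : ℕ) - (k : ℕ)) i)
      else 0 :=
  Smat_apply hb x N j k

open Classical in
/-- The `(j,k)`-entry of `S_{b,N}(x)` equals `∏_i binom(x + d_i - 1, d_i)` where the `d_i` are
the base-`b` digits of `j-k`, whenever `k ≤ j` and `k` is digitally dominated by `j` in base `b`;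
and it equals `0` otherwise. -/
theorem sierpinski_entry_formula (b N : ℕ) (hb : 2 ≤ b) (hN : 1 ≤ N) (x : ℝ)
    (j k : Fin (b ^ N)) :
    Smat b x N j k =
      if (k : ℕ) ≤ (j : ℕ) ∧ ∀ i, dig b k i ≤ dig b j i then
        ∏ i ∈ Finset.range N,
          binom (x + dig b ((j : ℕ) - (k : ℕ)) i - 1) (dig b ((j : ℕ) - (k : ℕ)) i)
      else 0 :=
  sierpinski_entry_formula_general b N hb x j k
end

section
/- Let b ≥ 2 be an integer, x a real number, and let X_{b,1}(x) be the b×b real matrix whose (j,k)-entry is x/(j-k) if j ≥ k+1 and 0 otherwise. Then for every integer n with 1 ≤ n ≤ b-1, the (j,k)-entry of the matrix power X_{b,1}(x)^n equals (n!/(j-k)!) · c(j-k, n) · x^n if j ≥ k+n, and 0 otherwise, where c(m,k) denotes the unsigned Stirling numbers of the first kind. -/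
/-!
Write `L = -log(1 - X) = ∑ Xᵐ/m`. The matrix `X1 b x` is the lower-triangular Toeplitz matrix of
the power series `x • L`, and lower-triangular Toeplitz matrices multiply like the power series
they come from, so `X1 b x ^ n` is the Toeplitz matrix of `xⁿ • Lⁿ`. Since `(1 - X) L' = 1`,
differentiating `Lⁿ⁺¹` gives `(1 - X) (Lⁿ⁺¹)' = (n + 1) Lⁿ`, which on coefficients is exactly the
recurrence `c(m+1, n+1) = m c(m, n+1) + c(m, n)` for `m! [Xᵐ] Lⁿ / n!`; hence
`[Xᵐ] Lⁿ = n! c(m, n) / m!`.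
-/

/-- The unsigned Stirling numbers of the first kind `c(n,k)`, defined by
`x(x+1)⋯(x+n-1) = ∑_{k=0}^{n} c(n,k) x^k`. They satisfy `c(n+1,k+1) = c(n,k) + n·c(n,k+1)`. -/
def stirl : ℕ → ℕ → ℕ
  | 0, 0 => 1
  | 0, _ + 1 => 0
  | _ + 1, 0 => 0
  | n + 1, k + 1 => stirl n k + n * stirl n (k + 1)

/-- The matrix `X_{b,1}(x)`, with `(j,k)`-entry `x/(j-k)` if `j ≥ k+1` and `0` otherwise. -/
noncomputable def X1 (b : ℕ) (x : ℝ) : Matrix (Fin b) (Fin b) ℝ :=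
  Matrix.of fun j k =>
    if (k : ℕ) + 1 ≤ (j : ℕ) then x / (((j : ℕ) - (k : ℕ) : ℕ) : ℝ) else 0

open PowerSeries

theorem stirl_eq_stirlingFirst : ∀ m n, stirl m n = Nat.stirlingFirst m n
  | 0, 0 | 0, _ + 1 | _ + 1, 0 => rfl
  | m + 1, n + 1 => by
    rw [stirl, Nat.stirlingFirst_succ_succ, stirl_eq_stirlingFirst m n,
      stirl_eq_stirlingFirst m (n + 1), add_comm]

noncomputable def lowerToeplitz {R : Type*} [Semiring R] (b : ℕ) (f : R⟦X⟧) :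
    Matrix (Fin b) (Fin b) R :=
  Matrix.of fun j k => if (k : ℕ) ≤ j then coeff ((j : ℕ) - k) f else 0

section
variable {R : Type*} [Semiring R] (b : ℕ)

theorem lowerToeplitz_apply (f : R⟦X⟧) (j k : Fin b) :
    lowerToeplitz b f j k = if (k : ℕ) ≤ j then coeff ((j : ℕ) - k) f else 0 := rfl

theorem lowerToeplitz_one : lowerToeplitz b (1 : R⟦X⟧) = 1 := by
  ext j k
  rw [lowerToeplitz_apply, coeff_one, Matrix.one_apply]
  split_ifs <;> simp only [Fin.ext_iff] at * <;> first | rfl | omega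

theorem lowerToeplitz_mul (f g : R⟦X⟧) :
    lowerToeplitz b f * lowerToeplitz b g = lowerToeplitz b (f * g) := by
  ext j k
  have hj := j.isLt
  simp only [Matrix.mul_apply, lowerToeplitz_apply]
  rw [Fin.sum_univ_eq_sum_range (fun l => (if l ≤ j then coeff ((j : ℕ) - l) f else 0) *
    if (k : ℕ) ≤ l then coeff (l - k) g else 0)]
  split_ifs with hkj
  · have hsub : Finset.Ico (k : ℕ) (j + 1) ⊆ Finset.range b := by
      intro l hl; simp only [Finset.mem_Ico, Finset.mem_range] at hl ⊢; omega
    rw [← Finset.sum_subset hsub, Finset.sum_Ico_eq_sum_range, coeff_mul,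
      ← Finset.Nat.sum_antidiagonal_swap]
    simp only [Prod.fst_swap, Prod.snd_swap]
    rw [Finset.Nat.sum_antidiagonal_eq_sum_range_succ (fun a c => coeff c f * coeff a g),
      show (j : ℕ) + 1 - k = ((j : ℕ) - k).succ by omega]
    · refine Finset.sum_congr rfl fun i hi => ?_
      rw [Finset.mem_range] at hi
      rw [if_pos (by omega), if_pos (by omega), Nat.add_sub_cancel_left, Nat.sub_add_eq]
    · intro l _ hl
      rw [Finset.mem_Ico] at hl
      split_ifs <;> first | omega | simp
  · refine Finset.sum_eq_zero fun l _ => ?_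
    split_ifs <;> first | omega | simp

theorem lowerToeplitz_pow (f : R⟦X⟧) (n : ℕ) :
    lowerToeplitz b f ^ n = lowerToeplitz b (f ^ n) := by
  induction n with
  | zero => rw [pow_zero, pow_zero, lowerToeplitz_one]
  | succ n ih => rw [pow_succ, ih, lowerToeplitz_mul, pow_succ]

end

theorem coeff_X_mul_derivative {R : Type*} [CommSemiring R] (f : R⟦X⟧) (m : ℕ) :
    coeff m (X * d⁄dX R f) = m * coeff m f := by
  cases m with
  | zero => simp
  | succ m => rw [coeff_succ_X_mul, coeff_derivative, mul_comm]; push_cast; ring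

/-- `-log(1 - X) = ∑ Xᵐ / m`; the constant term is the junk value `0⁻¹ = 0`. -/
noncomputable def negLogOneSub (K : Type*) [DivisionRing K] : K⟦X⟧ := mk fun m => (m : K)⁻¹

section
variable {K : Type*} [Field K] [CharZero K]

theorem derivative_negLogOneSub : d⁄dX K (negLogOneSub K) = mk 1 := by
  ext m
  rw [coeff_derivative, negLogOneSub, coeff_mk, coeff_mk]
  push_cast
  exact inv_mul_cancel₀ (Nat.cast_add_one_ne_zero m)

theorem one_sub_X_mul_derivative_negLogOneSub : (1 - X) * d⁄dX K (negLogOneSub K) = 1 := by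
  rw [derivative_negLogOneSub, mul_comm, mk_one_mul_one_sub_eq_one]

theorem coeff_negLogOneSub_pow_succ_rec (n m : ℕ) :
    (m + 1) * coeff (m + 1) (negLogOneSub K ^ (n + 1)) =
      m * coeff m (negLogOneSub K ^ (n + 1)) + (n + 1) * coeff m (negLogOneSub K ^ n) := by
  set L := negLogOneSub K
  have hD : d⁄dX K (L ^ (n + 1)) = X * d⁄dX K (L ^ (n + 1)) + C ((n : K) + 1) * L ^ n := by
    have h := one_sub_X_mul_derivative_negLogOneSub (K := K)
    rw [derivative_pow, Nat.add_sub_cancel, map_add, map_natCast, map_one]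
    push_cast
    linear_combination (↑n + 1) * L ^ n * h
  have := congrArg (coeff m) hD
  rwa [coeff_derivative, map_add, coeff_X_mul_derivative, coeff_C_mul, mul_comm] at this

theorem coeff_negLogOneSub_pow (n m : ℕ) :
    coeff m (negLogOneSub K ^ n) = n.factorial * Nat.stirlingFirst m n / m.factorial := by
  induction n generalizing m with
  | zero => cases m <;> simp [coeff_one]
  | succ n ihn =>
    induction m with
    | zero =>
      have h0 : constantCoeff (negLogOneSub K) = 0 := by simp [negLogOneSub]
      simp [h0]
    | succ m ihm =>
      have hrec := coeff_negLogOneSub_pow_succ_rec (K := K) n m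
      rw [ihm, ihn, Nat.factorial_succ n] at hrec
      have hfac : (m.factorial : K) ≠ 0 := Nat.cast_ne_zero.mpr m.factorial_ne_zero
      have hm : (m : K) + 1 ≠ 0 := Nat.cast_add_one_ne_zero m
      rw [Nat.stirlingFirst_succ_succ, Nat.factorial_succ m,
        eq_div_iff (by push_cast; exact mul_ne_zero hm hfac), Nat.factorial_succ n]
      push_cast at hrec ⊢
      field_simp at hrec
      linear_combination hrec

end

theorem X1_eq_lowerToeplitz (b : ℕ) (x : ℝ) : X1 b x = lowerToeplitz b (x • negLogOneSub ℝ) := by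
  ext j k
  rw [X1, Matrix.of_apply, lowerToeplitz_apply, coeff_smul, negLogOneSub, coeff_mk, smul_eq_mul,
    div_eq_mul_inv]
  split_ifs <;> first | rfl | omega | simp [show (j : ℕ) = k by omega]

theorem X1_pow_entry_general (b : ℕ) (x : ℝ) (n : ℕ) (j k : Fin b) :
    (X1 b x ^ n) j k =
      if (k : ℕ) + n ≤ (j : ℕ) then
        ((n.factorial : ℝ) / (((j : ℕ) - (k : ℕ)).factorial : ℝ)) *
          (stirl ((j : ℕ) - (k : ℕ)) n : ℝ) * x ^ n
      else 0 := by
  rw [X1_eq_lowerToeplitz, lowerToeplitz_pow, lowerToeplitz_apply, smul_pow, coeff_smul,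
    coeff_negLogOneSub_pow, stirl_eq_stirlingFirst, smul_eq_mul]
  split_ifs
  · ring
  · rw [Nat.stirlingFirst_eq_zero_of_lt (by omega)]
    simp
  · omega
  · rfl

/-- For `1 ≤ n ≤ b-1`, the `(j,k)`-entry of `X_{b,1}(x)^n` equals
`(n!/(j-k)!) · c(j-k, n) · x^n` if `j ≥ k+n`, and `0` otherwise. -/
theorem X1_pow_entry (b : ℕ) (hb : 2 ≤ b) (x : ℝ) (n : ℕ) (hn : 1 ≤ n) (hnb : n ≤ b - 1)
    (j k : Fin b) :
    (X1 b x ^ n) j k =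
      if (k : ℕ) + n ≤ (j : ℕ) then
        ((n.factorial : ℝ) / (((j : ℕ) - (k : ℕ)).factorial : ℝ)) *
          (stirl ((j : ℕ) - (k : ℕ)) n : ℝ) * x ^ n
      else 0 :=
  X1_pow_entry_general b x n j k
end

section
/- Let b ≥ 2 and N ≥ 1 be integers and let A = (a_0, a_1, …, a_{b-1}) be a zero-sum vector of complex numbers. Then there exists a polynomial P_N(x) with complex coefficients such that F_N(x;A) = P_N(x) · ∏_{m=0}^{N-1} (1 - x^{b^m}). -/
/-- `ptm b n` is the generalized Prouhet–Thue–Morse sequence `u_b(n)`: the sum of the base-`b`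
digits of `n`, reduced modulo `b`. -/
def ptm (b n : ℕ) : ℕ := (Nat.digits b n).sum % b

/-!
The polynomial `F_N(a)` is linear in `a`. Splitting off the lowest digit, `n = d + b m`, gives
`u_b(n) = d + u_b(m) mod b`, hence `F_{N+1}(a)(X) = ∑_d X^d F_N(a(d + ·))(X^b)`. If `a` has zero sum,
the rotations `a(d + ·)` add up to the zero vector, so `∑_d F_N(a(d + ·))(X^b) = 0` and
`F_{N+1}(a)(X) = ∑_d (X^d - 1) F_N(a(d + ·))(X^b)`. Each rotation is again zero-sum, so by induction
`∏_{m<N} (1 - X^{b^{m+1}})` divides every `F_N(a(d + ·))(X^b)`, and `1 - X` divides every `X^d - 1`.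
-/

open Polynomial Finset

theorem Nat.digits_sum_add_mul {b d : ℕ} (hd : d < b) (m : ℕ) :
    (Nat.digits b (d + b * m)).sum = d + (Nat.digits b m).sum := by
  rcases Nat.lt_trichotomy b 1 with hb | rfl | hb
  · omega
  · simp [show d = 0 by omega, Nat.digits_one]
  · by_cases h0 : d = 0 ∧ m = 0
    · simp [h0]
    · rw [Nat.digits_add b hb d m hd (by tauto), List.sum_cons]

theorem ptm_add_mul {b d : ℕ} (hd : d < b) (m : ℕ) : ptm b (d + b * m) = (d + ptm b m) % b := by
  simp [ptm, Nat.digits_sum_add_mul hd]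

theorem sum_range_mul_eq_sum_add_mul {M : Type*} [AddCommMonoid M] (k b : ℕ) (g : ℕ → M) :
    ∑ n ∈ range (k * b), g n = ∑ d : Fin b, ∑ m : Fin k, g (d + b * m) := by
  rw [Finset.sum_range, ← finProdFinEquiv.sum_comp, Fintype.sum_prod_type, Finset.sum_comm]
  rfl

section

variable {R : Type*} [CommRing R] {b : ℕ} [NeZero b]

/-- The Prouhet–Thue–Morse polynomial `F_N(X; a)`. -/
noncomputable def ptmPoly (N : ℕ) (a : Fin b → R) : R[X] :=
  ∑ n ∈ range (b ^ N), C (a ⟨ptm b n, Nat.mod_lt _ (NeZero.pos b)⟩) * X ^ n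

theorem ptmPoly_sum {ι : Type*} (s : Finset ι) (N : ℕ) (a : ι → Fin b → R) :
    ∑ i ∈ s, ptmPoly N (a i) = ptmPoly N (∑ i ∈ s, a i) := by
  simp only [ptmPoly, Finset.sum_apply, map_sum, Finset.sum_mul]
  exact Finset.sum_comm

theorem ptmPoly_zero (N : ℕ) : ptmPoly N (0 : Fin b → R) = 0 := by
  simp [ptmPoly]

theorem ptm_add_mul_fin (d : Fin b) (m : ℕ) :
    (⟨ptm b (d + b * m), Nat.mod_lt _ (NeZero.pos b)⟩ : Fin b) =
      d + ⟨ptm b m, Nat.mod_lt _ (NeZero.pos b)⟩ :=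
  Fin.ext (by simp [Fin.val_add, ptm_add_mul d.isLt])

theorem ptmPoly_succ (N : ℕ) (a : Fin b → R) :
    ptmPoly (N + 1) a = ∑ d : Fin b, X ^ (d : ℕ) * expand R b (ptmPoly N (fun i ↦ a (d + i))) := by
  rw [ptmPoly, pow_succ, sum_range_mul_eq_sum_add_mul]
  refine Fintype.sum_congr _ _ fun d ↦ ?_
  rw [ptmPoly, map_sum, Finset.mul_sum, Finset.sum_range]
  refine Fintype.sum_congr _ _ fun m ↦ ?_
  rw [ptm_add_mul_fin, map_mul, map_pow, expand_C, expand_X, pow_add, pow_mul]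
  ring

theorem sum_rotate_eq_zero {a : Fin b → R} (ha : ∑ i, a i = 0) :
    ∑ d : Fin b, (fun i ↦ a (d + i)) = 0 := by
  funext i
  simp only [Finset.sum_apply, Pi.zero_apply]
  exact (Equiv.sum_comp (Equiv.addRight i) a).trans ha

theorem ptmPoly_succ_of_sum_eq_zero (N : ℕ) {a : Fin b → R} (ha : ∑ i, a i = 0) :
    ptmPoly (N + 1) a =
      ∑ d : Fin b, (X ^ (d : ℕ) - 1) * expand R b (ptmPoly N (fun i ↦ a (d + i))) := by
  have hvanish : ∑ d : Fin b, expand R b (ptmPoly N (fun i ↦ a (d + i))) = 0 := by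
    rw [← map_sum, ptmPoly_sum, sum_rotate_eq_zero ha, ptmPoly_zero, map_zero]
  simp only [sub_mul, one_mul, Finset.sum_sub_distrib, hvanish, sub_zero, ptmPoly_succ]

theorem prod_one_sub_X_pow_dvd_ptmPoly (N : ℕ) {a : Fin b → R} (ha : ∑ i, a i = 0) :
    ∏ m ∈ range N, (1 - X ^ b ^ m) ∣ ptmPoly N a := by
  induction N generalizing a with
  | zero => simp
  | succ N ih =>
    have hexpand : expand R b (∏ m ∈ range N, (1 - X ^ b ^ m)) =
        ∏ m ∈ range N, (1 - X ^ b ^ (m + 1)) := by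
      simp only [map_prod, map_sub, map_one, map_pow, expand_X, ← pow_mul, pow_succ']
    rw [ptmPoly_succ_of_sum_eq_zero N ha, prod_range_succ', pow_zero, pow_one, mul_comm]
    refine Finset.dvd_sum fun d _ ↦ mul_dvd_mul ?_ ?_
    · rw [← neg_sub 1 (X ^ (d : ℕ)), dvd_neg]
      exact one_sub_dvd_one_sub_pow X d
    · have hrot : ∑ i, a (d + i) = 0 := (Equiv.sum_comp (Equiv.addLeft d) a).trans ha
      have := map_dvd (expand R b) (ih hrot)
      rwa [hexpand] at this

end

/-- For `b ≥ 2`, `N ≥ 1` and a zero-sum vector `A = (a_0, …, a_{b-1})` of complex numbers,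
there exists a polynomial `P_N(x)` with complex coefficients such that the Prouhet–Thue–Morse
polynomial `F_N(x;A) = ∑_{n=0}^{b^N-1} a_{u_b(n)} x^n` satisfies
`F_N(x;A) = P_N(x) · ∏_{m=0}^{N-1} (1 - x^{b^m})`. -/
theorem ptm_polynomial_factorization (b N : ℕ) (hb : 2 ≤ b)
    (a : Fin b → ℂ) (ha : ∑ i, a i = 0) :
    ∃ P : Polynomial ℂ,
      (∑ n ∈ Finset.range (b ^ N),
          Polynomial.C (a ⟨ptm b n, Nat.mod_lt _ (by omega)⟩) * Polynomial.X ^ n) =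
        P * ∏ m ∈ Finset.range N, (1 - Polynomial.X ^ b ^ m) := by
  have : NeZero b := ⟨by omega⟩
  obtain ⟨P, hP⟩ := prod_one_sub_X_pow_dvd_ptmPoly N ha
  exact ⟨P, hP.trans (mul_comm _ _)⟩
end
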